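/- arXiv:1612.05784 — 6 statements merged into one kernel-verified Lean document; each statement's English description precedes it below -/
import Mathlib

section
/- A subset D of size k in a finite abelian group G of size n is an (n,k,λ)-difference set if and only if for every character χ of G, |χ(D)|² = k² when χ is principal and |χ(D)|² = k − λ when χ is not principal. -/
/-!
Let `N g` count the pairs `(a, b) ∈ D × D` with `a - b = g`. Expanding `|χ(D)|² = χ(D) · conj χ(D)`
gives `|χ(D)|² = ∑_g N g χ(g)`, so the character sums are the Fourier coefficients of `N`.
`D` is a difference set iff `N = T` with `T g = if g = 0 then k else λ`, and the Fourier coefficient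
of `T` at a nonprincipal character is `k - λ`. Conversely, if the coefficients of `N` and `T` agree at
all nonprincipal characters, Fourier inversion shows that `N - T` is constant; it vanishes at `0`.
-/

open Finset

section FourierInversion

variable {G : Type*} [AddCommGroup G] [Fintype G]

theorem card_mul_eq_sum_addChar [DecidableEq G] (f : G → ℂ) (a : G) :
    Fintype.card G * f a = ∑ χ : AddChar G ℂ, (∑ g, f g * χ g) * χ (-a) := by
  calc (Fintype.card G : ℂ) * f a
      = ∑ g, f g * ∑ χ : AddChar G ℂ, χ (g - a) := by
        simp_rw [AddChar.sum_apply_eq_ite, sub_eq_zero, mul_ite, mul_zero]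
        rw [sum_ite_eq' univ a, if_pos (mem_univ a), mul_comm]
    _ = ∑ χ : AddChar G ℂ, (∑ g, f g * χ g) * χ (-a) := by
        simp_rw [mul_sum, sum_mul, sub_eq_add_neg, AddChar.map_add_eq_mul, mul_assoc]
        exact sum_comm

theorem apply_eq_of_sum_mul_addChar_eq_zero {f : G → ℂ}
    (hf : ∀ χ : AddChar G ℂ, χ ≠ 1 → ∑ g, f g * χ g = 0) (a b : G) : f a = f b := by
  classical
  have inversion (x : G) : Fintype.card G * f x = ∑ g, f g := by
    rw [card_mul_eq_sum_addChar, Fintype.sum_eq_single 1 fun χ hχ => by rw [hf χ hχ, zero_mul]]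
    simp
  exact mul_left_cancel₀ (Nat.cast_ne_zero.2 Fintype.card_ne_zero)
    ((inversion a).trans (inversion b).symm)

theorem eq_of_sum_mul_addChar_eq {f f' : G → ℂ} (h0 : f 0 = f' 0)
    (h : ∀ χ : AddChar G ℂ, χ ≠ 1 → ∑ g, f g * χ g = ∑ g, f' g * χ g) : f = f' := by
  have hconst := apply_eq_of_sum_mul_addChar_eq_zero (f := f - f') fun χ hχ => by
    simp only [Pi.sub_apply, sub_mul, sum_sub_distrib, h χ hχ, sub_self]
  funext g
  simpa [h0, sub_eq_zero] using hconst g 0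

theorem sum_ite_zero_mul_addChar_of_ne_one [DecidableEq G] {χ : AddChar G ℂ} (hχ : χ ≠ 1)
    (a b : ℂ) : ∑ g, (if g = 0 then a else b) * χ g = a - b := by
  have hsplit (g : G) :
      (if g = 0 then a else b) * χ g = (if g = 0 then a - b else 0) + b * χ g := by
    split_ifs with hg <;> simp [hg]
  rw [sum_congr rfl fun g _ => hsplit g, sum_add_distrib, sum_ite_eq' univ (0 : G),
    if_pos (mem_univ 0), ← mul_sum, AddChar.sum_eq_zero_iff_ne_zero.2 hχ, mul_zero, add_zero]

end FourierInversion

section DifferenceCount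

variable {G : Type*} [AddCommGroup G] [DecidableEq G]

def diffCount (D : Finset G) (g : G) : ℕ := #{p ∈ D ×ˢ D | p.1 - p.2 = g}

theorem diffCount_zero (D : Finset G) : diffCount D 0 = #D := by
  rw [diffCount, ← D.diag_card]
  congr 1
  ext ⟨a, b⟩
  simp only [mem_filter, mem_product, mem_diag, sub_eq_zero]
  exact ⟨fun ⟨⟨ha, _⟩, hab⟩ => ⟨ha, hab⟩, fun ⟨ha, hab⟩ => ⟨⟨ha, hab ▸ ha⟩, hab⟩⟩

theorem card_filter_ne_and_sub_eq (D : Finset G) {g : G} (hg : g ≠ 0) :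
    #{p ∈ D ×ˢ D | p.1 ≠ p.2 ∧ p.1 - p.2 = g} = diffCount D g := by
  refine congrArg card (filter_congr fun p _ => and_iff_right_of_imp fun h hp => hg ?_)
  rw [← h, hp, sub_self]

theorem forall_card_filter_eq_iff_diffCount_eq (D : Finset G) (lam : ℕ) :
    (∀ g : G, g ≠ 0 → #{p ∈ D ×ˢ D | p.1 ≠ p.2 ∧ p.1 - p.2 = g} = lam) ↔
      (fun g => (diffCount D g : ℂ)) = fun g => if g = 0 then (#D : ℂ) else lam := by
  refine ⟨fun h => funext fun g => ?_, fun h g hg => ?_⟩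
  · split_ifs with hg
    · rw [hg, diffCount_zero]
    · rw [← card_filter_ne_and_sub_eq D hg, h g hg]
  · simpa [card_filter_ne_and_sub_eq D hg, hg] using congrFun h g

theorem norm_sum_addChar_sq [Fintype G] (D : Finset G) (χ : AddChar G ℂ) :
    ((‖∑ d ∈ D, χ d‖ ^ 2 : ℝ) : ℂ) = ∑ g, (diffCount D g : ℂ) * χ g := by
  calc ((‖∑ d ∈ D, χ d‖ ^ 2 : ℝ) : ℂ)
      = (∑ d ∈ D, χ d) * ∑ d ∈ D, starRingEnd ℂ (χ d) := by
        rw [← map_sum (starRingEnd ℂ), Complex.mul_conj, Complex.sq_norm]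
    _ = ∑ p ∈ D ×ˢ D, χ (p.1 - p.2) := by
        simp_rw [sum_mul_sum, sum_product, ← AddChar.map_neg_eq_conj, sub_eq_add_neg,
          AddChar.map_add_eq_mul]
    _ = ∑ g, (diffCount D g : ℂ) * χ g := by
        rw [← sum_fiberwise_of_maps_to (fun p _ => mem_univ (p.1 - p.2))]
        refine sum_congr rfl fun g _ => ?_
        rw [diffCount, ← nsmul_eq_mul, ← sum_const]
        exact sum_congr rfl fun p hp => by rw [(mem_filter.1 hp).2]

end DifferenceCount

open scoped Classical in
theorem difference_set_iff_character_sums_general {G : Type*} [AddCommGroup G] [Fintype G]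
    [DecidableEq G] (k lam : ℕ)
    (D : Finset G) (hk : D.card = k) :
    (∀ g : G, g ≠ 0 →
        ((D ×ˢ D).filter (fun p => p.1 ≠ p.2 ∧ p.1 - p.2 = g)).card = lam) ↔
    (∀ χ : AddChar G ℂ,
        ‖∑ d ∈ D, χ d‖ ^ 2 = if χ = 1 then (k : ℝ) ^ 2 else (k : ℝ) - lam) := by
  subst hk
  have characters_iff : (∀ χ : AddChar G ℂ,
      ‖∑ d ∈ D, χ d‖ ^ 2 = if χ = 1 then (#D : ℝ) ^ 2 else (#D : ℝ) - lam) ↔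
      ∀ χ : AddChar G ℂ, χ ≠ 1 → ∑ g, (diffCount D g : ℂ) * χ g = #D - lam := by
    refine forall_congr' fun χ => ?_
    by_cases hχ : χ = 1
    · simp [hχ]
    · rw [if_neg hχ, ← Complex.ofReal_inj, norm_sum_addChar_sq]
      simp [hχ]
  rw [forall_card_filter_eq_iff_diffCount_eq, characters_iff]
  constructor
  · intro h χ hχ
    simp only [congrFun h, sum_ite_zero_mul_addChar_of_ne_one hχ]
  · intro h
    refine eq_of_sum_mul_addChar_eq (by simp [diffCount_zero]) fun χ hχ => ?_
    rw [h χ hχ, sum_ite_zero_mul_addChar_of_ne_one hχ]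

open scoped Classical in
/-- A subset `D` of size `k` of a finite abelian group `G` of size `n` is an
`(n,k,λ)`-difference set iff `|χ(D)|² = k²` for the principal character and
`k - λ` for nonprincipal characters. -/
theorem difference_set_iff_character_sums {G : Type*} [AddCommGroup G] [Fintype G]
    [DecidableEq G] (n k lam : ℕ) (hn : Fintype.card G = n)
    (D : Finset G) (hk : D.card = k) :
    (∀ g : G, g ≠ 0 →
        ((D ×ˢ D).filter (fun p => p.1 ≠ p.2 ∧ p.1 - p.2 = g)).card = lam) ↔
    (∀ χ : AddChar G ℂ,
        ‖∑ d ∈ D, χ d‖ ^ 2 = if χ = 1 then (k : ℝ) ^ 2 else (k : ℝ) - lam) :=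
  difference_set_iff_character_sums_general k lam D hk
end

section
/- Let {W_i = span{e^i_j}_{j=1}^m}_{i=1}^n be the equichordal tight fusion frame constructed from a semiregular divisible difference set, and let U be the m×m unitary with (ℓ,j) entry (1/√m)η_j(h_ℓ), where {h_ℓ} are coset representatives of G/N. Define (ẽ^i_1 ... ẽ^i_m) = (e^i_1 ... e^i_m)U*. Then for each i, W_i = span{ẽ^i_j}_{j=1}^m, each ẽ^i_j is a unit vector whose nonzero entries all have modulus √m/√k, and each ẽ^i_j has exactly k/m nonzero entries. -/
/-!
Multiplying by `U*` replaces the factor `η_ℓ(d)` in the entries of `Eᵢ` by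
`(1/√m) ∑_ℓ η_ℓ(d - h_j)`, and by orthogonality of the characters of `G/N` this sum is
`m` or `0` according as `d ∈ h_j + N` or not. Hence column `j` of `Ẽᵢ` is supported on
`D ∩ (h_j + N)`, where its entries are `(√m/√k) χᵢ(d)`; the same orthogonality shows that `U`
is unitary, so the column span is unchanged. Finally `D` meets every coset of `N` in exactly
`k/m` points, because `∑_{d ∈ D} ψ(d) = 0` for every nontrivial `ψ` trivial on `N`:
`|∑_D ψ|² = ∑_{x,y ∈ D} ψ(x - y) = k² + λ₂ ∑_g (ψ(g) - 1) = k² - λ₂ mn = 0`.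
-/

open Finset Matrix

namespace AddChar

variable {G M : Type*} [AddCommGroup G] [CommMonoid M]

def quotientEquivTrivialOn (N : AddSubgroup G) :
    AddChar (G ⧸ N) M ≃ {ψ : AddChar G M // ∀ h ∈ N, ψ h = 1} where
  toFun φ := ⟨φ.compAddMonoidHom (QuotientAddGroup.mk' N), fun h hh => by
    simp [(QuotientAddGroup.eq_zero_iff h).2 hh]⟩
  invFun ψ := toAddMonoidHomEquiv.symm <|
    QuotientAddGroup.lift N (toAddMonoidHomEquiv ψ.1) fun h hh => by simp [ψ.2 h hh]
  left_inv φ := by ext x; induction x using QuotientAddGroup.induction_on; rfl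
  right_inv ψ := rfl

lemma sum_trivialOn_apply_eq_ite [Finite G] {N : AddSubgroup G} {ι : Type*} [Fintype ι]
    (η : ι ≃ {ψ : AddChar G ℂ // ∀ h ∈ N, ψ h = 1}) (x : G) [Decidable (x ∈ N)] :
    ∑ j, (η j).1 x = if x ∈ N then (Fintype.card ι : ℂ) else 0 := by
  classical
  have : Fintype G := Fintype.ofFinite G
  let e := η.trans (quotientEquivTrivialOn N).symm
  rw [Fintype.sum_equiv e (fun j => (η j).1 x) (fun φ : AddChar (G ⧸ N) ℂ => φ x) fun j => rfl,
    sum_apply_eq_ite, ← card_eq, ← Fintype.card_congr e]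
  exact if_congr (QuotientAddGroup.eq_zero_iff x) rfl rfl

end AddChar

lemma Finset.card_filter_univ_equiv {α ι : Type*} [Fintype ι] {s : Finset α} (e : ι ≃ s)
    (p : α → Prop) [DecidablePred p] : #{i | p (e i)} = #{a ∈ s | p a} := by
  simp only [card_filter]
  exact (e.sum_comp fun a => if p a then 1 else 0).trans
    (sum_coe_sort s fun a => if p a then 1 else 0)

lemma Matrix.range_mulVecLin_mul_of_mul_eq_one {R l n : Type*} [CommRing R] [Fintype n]
    [DecidableEq n] (A : Matrix l n R) {B C : Matrix n n R} (hBC : B * C = 1) :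
    LinearMap.range (A * B).mulVecLin = LinearMap.range A.mulVecLin := by
  rw [mulVecLin_mul]
  exact LinearMap.range_comp_of_range_eq_top _ <| LinearMap.range_eq_top.2 fun v =>
    ⟨C *ᵥ v, by rw [mulVecLin_apply, mulVec_mulVec, hBC, one_mulVec]⟩

section DifferenceSet

variable {G : Type*} [AddCommGroup G] [Fintype G] [DecidableEq G] {N : AddSubgroup G}
  {D : Finset G} {l2 : ℕ}
  (hdd2 : ∀ g : G, g ∉ N →
    ((D ×ˢ D).filter (fun p => p.1 ≠ p.2 ∧ p.1 - p.2 = g)).card = l2)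
include hdd2

lemma sum_product_sub_eq_nsmul_sum {M : Type*} [AddCommMonoid M] (F : G → M)
    (hF : ∀ x ∈ N, F x = 0) : ∑ p ∈ D ×ˢ D, F (p.1 - p.2) = l2 • ∑ g, F g := by
  rw [← sum_fiberwise_of_maps_to (g := fun p => p.1 - p.2) (t := univ) fun _ _ => mem_univ _,
    smul_sum]
  refine sum_congr rfl fun g _ => ?_
  rw [sum_congr rfl fun p hp => congrArg F (mem_filter.1 hp).2, sum_const]
  by_cases hg : g ∈ N
  · rw [hF g hg, smul_zero, smul_zero]
  · rw [← hdd2 g hg]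
    congr 2
    refine filter_congr fun p _ => ⟨fun hp => ⟨fun hpp => ?_, hp⟩, And.right⟩
    rw [hpp, sub_self] at hp
    exact hg (hp ▸ N.zero_mem)

lemma sum_eq_zero_of_trivialOn (hsr : #D ^ 2 = l2 * Fintype.card G) {ψ : AddChar G ℂ}
    (hψ : ψ ≠ 0) (hψN : ∀ h ∈ N, ψ h = 1) : ∑ g ∈ D, ψ g = 0 := by
  have hnormSq : (∑ g ∈ D, ψ g) * starRingEnd ℂ (∑ g ∈ D, ψ g)
      = ∑ p ∈ D ×ˢ D, ψ (p.1 - p.2) := by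
    simp [map_sum, sum_mul_sum, sum_product, sub_eq_add_neg, AddChar.map_add_eq_mul,
      AddChar.map_neg_eq_conj]
  have hsplit : ∑ p ∈ D ×ˢ D, ψ (p.1 - p.2) = #D ^ 2 + l2 • ∑ g, (ψ g - 1) := by
    rw [← sum_product_sub_eq_nsmul_sum hdd2 (fun g => ψ g - 1) (by simp +contextual [hψN])]
    simp [sum_sub_distrib, card_product, sq]
  rw [sum_sub_distrib, AddChar.sum_eq_zero_iff_ne_zero.2 hψ] at hsplit
  rw [← Complex.normSq_eq_zero, ← Complex.ofReal_eq_zero, ← Complex.mul_conj, hnormSq, hsplit]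
  simp [← Nat.cast_pow, hsr]

lemma card_filter_sub_mem_mul_card (hsr : #D ^ 2 = l2 * Fintype.card G) [DecidablePred (· ∈ N)]
    {ι : Type*} [Fintype ι] (η : ι ≃ {ψ : AddChar G ℂ // ∀ h ∈ N, ψ h = 1}) (x : G) :
    #{g ∈ D | g - x ∈ N} * Fintype.card ι = #D := by
  have hcount : ∑ g ∈ D, ∑ j, (η j).1 (g - x) = (#{g ∈ D | g - x ∈ N} * Fintype.card ι : ℕ) := by
    simp [AddChar.sum_trivialOn_apply_eq_ite, sum_ite]
  have htrivial : ∑ j, ∑ g ∈ D, (η j).1 (g - x) = #D := by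
    rw [sum_eq_single (η.symm ⟨0, fun _ _ => rfl⟩)]
    · simp
    · intro j _ hj
      have hηj : (η j).1 ≠ 0 := fun h0 => hj (η.eq_symm_apply.2 (Subtype.ext h0))
      simp_rw [sub_eq_add_neg, AddChar.map_add_eq_mul, ← sum_mul,
        sum_eq_zero_of_trivialOn hdd2 hsr hηj (η j).2, zero_mul]
    · simp
  exact_mod_cast hcount.symm.trans (sum_comm.trans htrivial)

end DifferenceSet

section CharacterMatrix

variable {G : Type*} [AddCommGroup G] [Fintype G] {N : AddSubgroup G}
  {m : ℕ} (η : Fin m ≃ {ψ : AddChar G ℂ // ∀ h ∈ N, ψ h = 1}) (h : Fin m → G)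
  {U : Matrix (Fin m) (Fin m) ℂ} (hU : ∀ ℓ j, U ℓ j = (√m : ℂ)⁻¹ * (η j).1 (h ℓ))
include hU

lemma mul_conjTranspose_apply_eq_ite [DecidablePred (· ∈ N)] {κ : Type*} {A : Matrix κ (Fin m) ℂ}
    {a : κ → ℂ} {x : κ → G} (hA : ∀ t ℓ, A t ℓ = a t * (η ℓ).1 (x t)) (t : κ) (j : Fin m) :
    (A * Uᴴ) t j = if x t - h j ∈ N then √m * a t else 0 := by
  have hsqrt : (√m : ℂ)⁻¹ * m = √m := by
    rw [← Complex.ofReal_natCast, ← Complex.ofReal_inv, ← Complex.ofReal_mul, inv_mul_eq_div,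
      Real.div_sqrt]
  simp_rw [mul_apply, conjTranspose_apply, hA, hU, star_mul', star_inv₀, Complex.star_def,
    Complex.conj_ofReal, ← AddChar.map_neg_eq_conj]
  calc ∑ ℓ, a t * (η ℓ).1 (x t) * ((√m : ℂ)⁻¹ * (η ℓ).1 (-h j))
      = a t * (√m : ℂ)⁻¹ * ∑ ℓ, (η ℓ).1 (x t - h j) := by
        simp_rw [mul_sum, sub_eq_add_neg, AddChar.map_add_eq_mul]
        exact sum_congr rfl fun _ _ => by ring
    _ = _ := by
        rw [AddChar.sum_trivialOn_apply_eq_ite, Fintype.card_fin, mul_ite, mul_zero, mul_assoc,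
          hsqrt, mul_comm]

lemma mul_conjTranspose_self_eq_one (hinj : Function.Injective fun ℓ => (h ℓ : G ⧸ N)) :
    U * Uᴴ = 1 := by
  classical
  ext a b
  have hsqrt : (√m : ℂ) ≠ 0 := by simpa using a.pos.ne'
  rw [mul_conjTranspose_apply_eq_ite η h hU hU a b, one_apply, mul_inv_cancel₀ hsqrt]
  exact if_congr (QuotientAddGroup.eq_iff_sub_mem.symm.trans hinj.eq_iff) rfl rfl

end CharacterMatrix

open Matrix in
theorem semiregular_dds_sparse_general {G : Type*} [AddCommGroup G] [Fintype G]
    [DecidableEq G] (m n k l2 : ℕ) (hm : 0 < m) (hk : 0 < k)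
    (N : AddSubgroup G) (hG : Fintype.card G = m * n)
    (D : Finset G) (hD : D.card = k)
    (hdd2 : ∀ g : G, g ∉ N →
        ((D ×ˢ D).filter (fun p => p.1 ≠ p.2 ∧ p.1 - p.2 = g)).card = l2)
    (hsr2 : k ^ 2 = l2 * (m * n))
    (η : Fin m ≃ {χ : AddChar G ℂ // ∀ h ∈ N, χ h = 1})
    (χ : Fin n → AddChar G ℂ)
    (d : Fin k ≃ {x // x ∈ D})
    (E : Fin n → Matrix (Fin k) (Fin m) ℂ)
    (hE : ∀ i t j, E i t j = ((Real.sqrt k : ℂ))⁻¹ * (χ i * (η j).1) ((d t : G)))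
    (h : Fin m → G)
    (hrep : Function.Bijective fun ℓ => (QuotientAddGroup.mk (h ℓ) : G ⧸ N))
    (U : Matrix (Fin m) (Fin m) ℂ)
    (hU : ∀ ℓ j, U ℓ j = ((Real.sqrt m : ℂ))⁻¹ * (η j).1 (h ℓ))
    (Et : Fin n → Matrix (Fin k) (Fin m) ℂ)
    (hEt : ∀ i, Et i = E i * Uᴴ) :
    (∀ i, LinearMap.range (Et i).mulVecLin = LinearMap.range (E i).mulVecLin) ∧
    (∀ i j, ∑ t, ‖Et i t j‖ ^ 2 = 1) ∧
    (∀ i j t, Et i t j ≠ 0 →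
      ‖Et i t j‖ = Real.sqrt m / Real.sqrt k) ∧
    (∀ i j, (Finset.univ.filter fun t => Et i t j ≠ 0).card * m = k) := by
  classical
  have hE' : ∀ i t ℓ, E i t ℓ = ((√k : ℂ)⁻¹ * χ i (d t)) * (η ℓ).1 (d t) := by
    simp [hE, AddChar.mul_apply, mul_assoc]
  have hnorm : ∀ i t j, ‖Et i t j‖ = if (d t : G) - h j ∈ N then √m / √k else 0 := by
    intro i t j
    rw [hEt, mul_conjTranspose_apply_eq_ite η h hU (hE' i) t j]
    split_ifs <;> simp [div_eq_mul_inv, abs_of_nonneg (Real.sqrt_nonneg _)]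
  have hsupport : ∀ i t j, Et i t j ≠ 0 ↔ (d t : G) - h j ∈ N := by
    have : √m / √k ≠ 0 := by positivity
    intro i t j
    rw [← norm_ne_zero_iff, hnorm]
    simp [this]
  have hcount : ∀ j, #{t | (d t : G) - h j ∈ N} * m = k := by
    intro j
    rw [card_filter_univ_equiv d (· - h j ∈ N), ← hD, ← Fintype.card_fin m]
    exact card_filter_sub_mem_mul_card hdd2 (by rw [hD, hG, hsr2]) η (h j)
  refine ⟨fun i => ?_, fun i j => ?_, fun i j t ht => ?_, fun i j => ?_⟩
  · rw [hEt]
    exact range_mulVecLin_mul_of_mul_eq_one _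
      (mul_eq_one_comm.1 (mul_conjTranspose_self_eq_one η h hU hrep.injective))
  · calc ∑ t, ‖Et i t j‖ ^ 2 = #{t | (d t : G) - h j ∈ N} * ((m : ℝ) / k) := by
          simp [hnorm, sum_ite, div_pow]
      _ = 1 := by rw [← mul_div_assoc, ← Nat.cast_mul, hcount, div_self (by positivity)]
  · rw [hnorm, if_pos ((hsupport i t j).1 ht)]
  · rw [filter_congr fun t _ => hsupport i t j, hcount]

open Matrix in
/-- Sparse, almost flat version of the semiregular divisible difference set
construction: multiplying each block `Lᵢ` on the right by `U*` (with `U` built from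
the annihilator and coset representatives of `G/N`) preserves the column span, and
the new columns are unit vectors with exactly `k/m` nonzero entries, all of
modulus `√m/√k`. -/
theorem semiregular_dds_sparse {G : Type*} [AddCommGroup G] [Fintype G]
    [DecidableEq G] (m n k l1 l2 : ℕ) (hm : 0 < m) (hn : 0 < n) (hk : 0 < k)
    (N : AddSubgroup G) (hG : Fintype.card G = m * n) (hNcard : Nat.card N = n)
    (D : Finset G) (hD : D.card = k)
    (hdd2 : ∀ g : G, g ∉ N →
        ((D ×ˢ D).filter (fun p => p.1 ≠ p.2 ∧ p.1 - p.2 = g)).card = l2)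
    (hdd1 : ∀ g : G, g ∈ N → g ≠ 0 →
        ((D ×ˢ D).filter (fun p => p.1 ≠ p.2 ∧ p.1 - p.2 = g)).card = l1)
    (hsr1 : l1 < k) (hsr2 : k ^ 2 = l2 * (m * n))
    (η : Fin m ≃ {χ : AddChar G ℂ // ∀ h ∈ N, χ h = 1})
    (χ : Fin n → AddChar G ℂ)
    (hχ : ∀ ψ : AddChar G ℂ, ∃! i : Fin n, ∃ j : Fin m, ψ = χ i * (η j).1)
    (d : Fin k ≃ {x // x ∈ D})
    (E : Fin n → Matrix (Fin k) (Fin m) ℂ)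
    (hE : ∀ i t j, E i t j = ((Real.sqrt k : ℂ))⁻¹ * (χ i * (η j).1) ((d t : G)))
    (h : Fin m → G)
    (hrep : Function.Bijective fun ℓ => (QuotientAddGroup.mk (h ℓ) : G ⧸ N))
    (U : Matrix (Fin m) (Fin m) ℂ)
    (hU : ∀ ℓ j, U ℓ j = ((Real.sqrt m : ℂ))⁻¹ * (η j).1 (h ℓ))
    (Et : Fin n → Matrix (Fin k) (Fin m) ℂ)
    (hEt : ∀ i, Et i = E i * Uᴴ) :
    (∀ i, LinearMap.range (Et i).mulVecLin = LinearMap.range (E i).mulVecLin) ∧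
    (∀ i j, ∑ t, ‖Et i t j‖ ^ 2 = 1) ∧
    (∀ i j t, Et i t j ≠ 0 →
      ‖Et i t j‖ = Real.sqrt m / Real.sqrt k) ∧
    (∀ i j, (Finset.univ.filter fun t => Et i t j ≠ 0).card * m = k) :=
  semiregular_dds_sparse_general m n k l2 hm hk N hG D hD hdd2 hsr2 η χ d E hE h hrep U hU Et hEt
end

section
/- Let 𝒜 be a subring of the algebraic integers closed under complex conjugation, and let {W_i}_{i=1}^n be an equichordal tight fusion frame of n m-dimensional subspaces of 𝔽^k with orthonormal basis matrices L_i such that all entries of √k·L_i lie in 𝒜. Then km(mn−k)/(n−1) is an integer. -/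
/-!
Take two distinct frame elements `i ≠ j` and put `Sᵢ = √k·Lᵢ`. The cross-Gram matrix
`T = Sᵢᴴ Sⱼ` has entries in `𝒜`, hence so does `tr (Tᴴ T)`, which is therefore an algebraic
integer. By cyclicity of the trace, `tr (Tᴴ T) = tr (Sᵢ Sᵢᴴ Sⱼ Sⱼᴴ) = k² tr (Pᵢ Pⱼ)`, and the
equichordal condition makes this the rational number `km(mn-k)/(n-1)`. A rational algebraic
integer is an integer.
-/

namespace Matrix

variable {l m n R : Type*} [Fintype l]

section StarClosedSubring

variable [CommRing R] [StarRing R] {A : Subring R}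

theorem conjTranspose_mul_apply_mem (hA : ∀ x ∈ A, star x ∈ A) {M : Matrix l m R}
    {N : Matrix l n R} (hM : ∀ i j, M i j ∈ A) (hN : ∀ i j, N i j ∈ A) (i : m) (j : n) :
    (Mᴴ * N) i j ∈ A :=
  A.sum_mem fun r _ => A.mul_mem (hA _ (hM r i)) (hN r j)

theorem trace_conjTranspose_mul_self_mem [Fintype m] (hA : ∀ x ∈ A, star x ∈ A)
    {M : Matrix m m R} (hM : ∀ i j, M i j ∈ A) : (Mᴴ * M).trace ∈ A :=
  A.sum_mem fun i _ => conjTranspose_mul_apply_mem hA hM hM i i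

end StarClosedSubring

theorem trace_conjTranspose_mul_self_of_conjTranspose_mul [Fintype m] [Fintype n] [CommRing R]
    [StarRing R] (M : Matrix l m R) (N : Matrix l n R) :
    ((Mᴴ * N)ᴴ * (Mᴴ * N)).trace = (M * Mᴴ * (N * Nᴴ)).trace := by
  rw [conjTranspose_mul, conjTranspose_conjTranspose, Matrix.mul_assoc, trace_mul_comm,
    Matrix.mul_assoc, Matrix.mul_assoc, Matrix.mul_assoc]

theorem ofReal_smul_mul_conjTranspose_ofReal_smul [Fintype n] (c : ℝ) (M : Matrix m n ℂ) :
    (c : ℂ) • M * ((c : ℂ) • M)ᴴ = ((c ^ 2 : ℝ) : ℂ) • (M * Mᴴ) := by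
  rw [conjTranspose_smul, Complex.star_def, Complex.conj_ofReal, Matrix.smul_mul,
    Matrix.mul_smul, smul_smul, ← pow_two, Complex.ofReal_pow]

end Matrix

theorem sq_mul_div_mul_self {K : Type*} [Field K] (k a b : K) :
    k ^ 2 * (a / (k * b)) = k * a / b := by
  rcases eq_or_ne k 0 with rfl | hk
  · simp
  · field_simp

open Matrix in
theorem equichordal_integrality_general (n m k : ℕ) (hn : 1 < n)
    (A : Subring ℂ) (hAint : ∀ x ∈ A, IsIntegral ℤ x)
    (hAconj : ∀ x ∈ A, (starRingEnd ℂ) x ∈ A)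
    (L : Fin n → Matrix (Fin k) (Fin m) ℂ)
    (hchordal : ∀ i j, i ≠ j →
      ((L i * (L i)ᴴ) * (L j * (L j)ᴴ)).trace =
        (((m : ℝ) * ((m : ℝ) * n - k) / ((k : ℝ) * ((n : ℝ) - 1)) : ℝ) : ℂ))
    (hflat : ∀ i t s, (Real.sqrt k : ℂ) * L i t s ∈ A) :
    ∃ z : ℤ, (k : ℝ) * m * ((m : ℝ) * n - k) / ((n : ℝ) - 1) = z := by
  let S : Fin n → Matrix (Fin k) (Fin m) ℂ := fun i => (Real.sqrt k : ℂ) • L i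
  let i : Fin n := ⟨0, by omega⟩
  let j : Fin n := ⟨1, hn⟩
  have hmem : (((S i)ᴴ * S j)ᴴ * ((S i)ᴴ * S j)).trace ∈ A :=
    trace_conjTranspose_mul_self_mem hAconj
      (conjTranspose_mul_apply_mem hAconj (hflat i) (hflat j))
  have htrace : (((S i)ᴴ * S j)ᴴ * ((S i)ᴴ * S j)).trace =
      (((k : ℝ) * m * ((m : ℝ) * n - k) / ((n : ℝ) - 1) : ℝ) : ℂ) := by
    calc _ = (S i * (S i)ᴴ * (S j * (S j)ᴴ)).trace :=
          trace_conjTranspose_mul_self_of_conjTranspose_mul _ _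
      _ = (k : ℂ) ^ 2 * (L i * (L i)ᴴ * (L j * (L j)ᴴ)).trace := by
          rw [ofReal_smul_mul_conjTranspose_ofReal_smul, ofReal_smul_mul_conjTranspose_ofReal_smul,
            smul_mul_smul_comm, trace_smul, Real.sq_sqrt (Nat.cast_nonneg k), smul_eq_mul,
            ← pow_two, Complex.ofReal_natCast]
      _ = _ := by
          rw [hchordal i j (by simp [i, j, Fin.ext_iff])]
          push_cast
          rw [sq_mul_div_mul_self, mul_assoc]
  obtain ⟨z, hz⟩ := (IsIntegral.exists_int_iff_exists_rat (hAint _ hmem)).mp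
    ⟨(k : ℚ) * m * ((m : ℚ) * n - k) / ((n : ℚ) - 1), by rw [htrace]; push_cast; rfl⟩
  exact ⟨z, by exact_mod_cast htrace.symm.trans hz⟩

open Matrix in
/-- Integrality condition for flat equichordal tight fusion frames: if all entries
of the `√k·Lᵢ` lie in a subring of the algebraic integers closed under conjugation,
then `km(mn-k)/(n-1)` is an integer. -/
theorem equichordal_integrality (n m k : ℕ) (hn : 1 < n) (hk : 0 < k) (hm : 0 < m)
    (A : Subring ℂ) (hAint : ∀ x ∈ A, IsIntegral ℤ x)
    (hAconj : ∀ x ∈ A, (starRingEnd ℂ) x ∈ A)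
    (L : Fin n → Matrix (Fin k) (Fin m) ℂ)
    (honb : ∀ i, (L i)ᴴ * L i = 1)
    (B : ℝ) (hB : 0 < B) (htight : ∑ i, L i * (L i)ᴴ = (B : ℂ) • 1)
    (hchordal : ∀ i j, i ≠ j →
      ((L i * (L i)ᴴ) * (L j * (L j)ᴴ)).trace =
        (((m : ℝ) * ((m : ℝ) * n - k) / ((k : ℝ) * ((n : ℝ) - 1)) : ℝ) : ℂ))
    (hflat : ∀ i t s, (Real.sqrt k : ℂ) * L i t s ∈ A) :
    ∃ z : ℤ, (k : ℝ) * m * ((m : ℝ) * n - k) / ((n : ℝ) - 1) = z :=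
  equichordal_integrality_general n m k hn A hAint hAconj L hchordal hflat
end

section
/- Let 𝒜 be a subring of the algebraic integers closed under complex conjugation, and let {W_i}_{i=1}^n be an equiisoclinic tight fusion frame of n m-dimensional subspaces of 𝔽^k with orthonormal basis matrices L_i such that all entries of √k·L_i lie in 𝒜. Then k(mn−k)/(n−1) is an integer. -/
open Matrix in
/-- Integrality condition for flat equiisoclinic tight fusion frames: if all entries
of the `√k·Lᵢ` lie in a subring of the algebraic integers closed under conjugation,
then `k(mn-k)/(n-1)` is an integer. -/
theorem equiisoclinic_integrality (n m k : ℕ) (hn : 1 < n) (hk : 0 < k) (hm : 0 < m)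
    (A : Subring ℂ) (hAint : ∀ x ∈ A, IsIntegral ℤ x)
    (hAconj : ∀ x ∈ A, (starRingEnd ℂ) x ∈ A)
    (L : Fin n → Matrix (Fin k) (Fin m) ℂ)
    (honb : ∀ i, (L i)ᴴ * L i = 1)
    (B : ℝ) (hB : 0 < B) (htight : ∑ i, L i * (L i)ᴴ = (B : ℂ) • 1)
    (hiso : ∀ i j, i ≠ j →
      (L i)ᴴ * L j * (L j)ᴴ * L i =
        ((((m : ℝ) * n - k) / ((k : ℝ) * ((n : ℝ) - 1)) : ℝ) : ℂ) • 1)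
    (hflat : ∀ i t s, (Real.sqrt k : ℂ) * L i t s ∈ A) :
    ∃ z : ℤ, (k : ℝ) * ((m : ℝ) * n - k) / ((n : ℝ) - 1) = z := by
  have hk0 : (0:ℝ) < k := by exact_mod_cast hk
  have hn1 : (1:ℝ) < n := by exact_mod_cast hn
  set α : ℝ := ((m : ℝ) * n - k) / ((k : ℝ) * ((n : ℝ) - 1)) with hα
  obtain ⟨i, j, hij⟩ : ∃ i j : Fin n, i ≠ j :=
    ⟨⟨0, by omega⟩, ⟨1, by omega⟩, by simp [Fin.ext_iff]⟩
  set M : Fin n → Matrix (Fin k) (Fin m) ℂ := fun i => (Real.sqrt k : ℂ) • L i with hM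
  have hMA : ∀ i t s, M i t s ∈ A := by
    intro i t s
    simpa [hM, Matrix.smul_apply, smul_eq_mul] using hflat i t s
  have hMHA : ∀ i s t, (M i)ᴴ s t ∈ A := by
    intro i s t
    simpa [Matrix.conjTranspose_apply] using hAconj _ (hMA i t s)
  have mulmem : ∀ {p q r : ℕ} (X : Matrix (Fin p) (Fin q) ℂ) (Y : Matrix (Fin q) (Fin r) ℂ),
      (∀ a b, X a b ∈ A) → (∀ a b, Y a b ∈ A) → ∀ a b, (X * Y) a b ∈ A := by
    intro p q r X Y hX hY a b
    rw [Matrix.mul_apply]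
    exact Subring.sum_mem _ fun c _ => A.mul_mem (hX a c) (hY c b)
  set P : Matrix (Fin m) (Fin m) ℂ := (M i)ᴴ * M j * (M j)ᴴ * M i with hP
  have hPA : ∀ a b, P a b ∈ A := by
    intro a b
    exact mulmem _ _ (mulmem _ _ (mulmem _ _ (hMHA i) (hMA j)) (hMHA j)) (hMA i) a b
  have hsq : (Real.sqrt k : ℂ) * (Real.sqrt k : ℂ) = (k : ℂ) := by
    rw [← Complex.ofReal_mul]
    norm_cast
    exact Real.mul_self_sqrt hk0.le
  have hPval : P = (((k:ℝ)^2 * α : ℝ) : ℂ) • (1 : Matrix (Fin m) (Fin m) ℂ) := by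
    rw [hP, hM]
    simp only [Matrix.conjTranspose_smul, Matrix.smul_mul, Matrix.mul_smul, smul_smul,
      Complex.star_def, Complex.conj_ofReal]
    rw [hiso i j hij, smul_smul]
    congr 1
    push_cast
    rw [show (Real.sqrt k : ℂ) * ((Real.sqrt k : ℂ) * ((Real.sqrt k : ℂ) * (Real.sqrt k : ℂ)))
        = ((Real.sqrt k : ℂ) * (Real.sqrt k : ℂ)) * ((Real.sqrt k : ℂ) *
        (Real.sqrt k : ℂ)) by ring, hsq]
    ring
  set s : Fin m := ⟨0, hm⟩
  have hcA : (((k:ℝ)^2 * α : ℝ) : ℂ) ∈ A := by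
    have := hPA s s
    rwa [hPval, Matrix.smul_apply, Matrix.one_apply_eq, smul_eq_mul, mul_one] at this
  -- the real number in question
  set r : ℝ := (k : ℝ) * ((m : ℝ) * n - k) / ((n : ℝ) - 1) with hr
  have hkne : (k:ℝ) ≠ 0 := ne_of_gt hk0
  have hnne : (n:ℝ) - 1 ≠ 0 := by linarith
  have hrc : (k:ℝ)^2 * α = r := by
    rw [hα, hr]
    field_simp
  set q : ℚ := ((k : ℚ) * ((m : ℚ) * n - k)) / ((n : ℚ) - 1) with hq
  have hrq : r = (q : ℝ) := by
    rw [hr, hq]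
    push_cast
    ring
  have hint : IsIntegral ℤ ((q : ℂ)) := by
    have h1 : ((r : ℝ) : ℂ) ∈ A := by rwa [← hrc]
    have := hAint _ h1
    rwa [hrq] at this
    
  have hintq : IsIntegral ℤ q := by
    rw [show ((q : ℂ)) = algebraMap ℚ ℂ q from (eq_ratCast (algebraMap ℚ ℂ) q).symm] at hint
    exact (isIntegral_algebraMap_iff (algebraMap ℚ ℂ).injective).mp hint
  obtain ⟨z, hz⟩ := IsIntegrallyClosed.isIntegral_iff.mp hintq
  refine ⟨z, ?_⟩
  rw [hrq, ← hz, eq_intCast (algebraMap ℤ ℚ) z]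
  push_cast
  ring
end

section
/- Let {W_i}_{i=1}^n be m-dimensional subspaces of 𝔽^k with orthonormal basis matrices L_i, and {U_i}_{i=1}^n unitary r×r matrices. For each i define L̄_i as the rk×rm matrix with block columns (e^i_j ⊗ U_i). Then: (a) the columns of each L̄_i form rm orthonormal vectors in 𝔽^{rk}; (b) L̄_i* L̄_ĩ L̄_ĩ* L̄_i = (L_i* L_ĩ L_ĩ* L_i) ⊗ I_r for i ≠ ĩ; hence the tensored family is equichordal (resp. equiisoclinic, strongly simplicial) if and only if the original family is. -/
open Matrix Kronecker Polynomial

lemma kron_conjTranspose {α : Type*} [CommRing α] [StarRing α] {l m p q : Type*}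
    (A : Matrix l m α) (B : Matrix p q α) :
    (A ⊗ₖ B)ᴴ = Aᴴ ⊗ₖ Bᴴ := by
  ext ⟨a, b⟩ ⟨c, d⟩
  simp [conjTranspose_apply, kroneckerMap_apply, star_mul', mul_comm]

lemma charmatrix_kron_one {α : Type*} [CommRing α] {m' r' : Type*} [Fintype m'] [Fintype r']
    [DecidableEq m'] [DecidableEq r'] (A : Matrix m' m' α) :
    charmatrix (A ⊗ₖ (1 : Matrix r' r' α)) =
      charmatrix A ⊗ₖ (1 : Matrix r' r' α[X]) := by
  apply Matrix.ext
  rintro ⟨a, i⟩ ⟨c, j⟩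
  simp only [charmatrix_apply, kroneckerMap_apply, Matrix.diagonal_apply, Matrix.one_apply,
    Prod.mk.injEq]
  by_cases hij : i = j <;> by_cases hac : a = c <;>
    simp [hij, hac, sub_mul]

lemma charpoly_kron_one {α : Type*} [CommRing α] {m' r' : Type*} [Fintype m'] [Fintype r']
    [DecidableEq m'] [DecidableEq r'] (A : Matrix m' m' α) :
    (A ⊗ₖ (1 : Matrix r' r' α)).charpoly = A.charpoly ^ Fintype.card r' := by
  rw [Matrix.charpoly, charmatrix_kron_one, det_kronecker, det_one, one_pow, mul_one,
    Matrix.charpoly]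

lemma monic_pow_inj {K : Type*} [Field K] [CharZero K] {p q : K[X]}
    (hp : p.Monic) (hq : q.Monic) {r : ℕ} (hr : 0 < r) (h : p ^ r = q ^ r) : p = q := by
  have hdeg : p.natDegree = q.natDegree := by
    have := congrArg Polynomial.natDegree h
    rwa [hp.natDegree_pow, hq.natDegree_pow, Nat.mul_left_cancel_iff hr] at this
  set d := p.natDegree
  set S : K[X] := ∑ i ∈ Finset.range r, p ^ i * q ^ (r - 1 - i) with hS
  have hterm : ∀ i ∈ Finset.range r, (p ^ i * q ^ (r - 1 - i)).coeff ((r - 1) * d) = 1 := by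
    intro i hi
    have hi' : i ≤ r - 1 := Nat.le_pred_of_lt (Finset.mem_range.mp hi)
    have hmon : (p ^ i * q ^ (r - 1 - i)).Monic := (hp.pow i).mul (hq.pow _)
    have hdeg' : (p ^ i * q ^ (r - 1 - i)).natDegree = (r - 1) * d := by
      rw [(hp.pow i).natDegree_mul (hq.pow _), hp.natDegree_pow, hq.natDegree_pow, ← hdeg]
      rw [← Nat.add_mul, Nat.add_sub_cancel' hi']
    rw [← hdeg']
    exact hmon.coeff_natDegree
  have hScoeff : S.coeff ((r - 1) * d) = (r : K) := by
    rw [hS, Polynomial.finset_sum_coeff, Finset.sum_congr rfl hterm]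
    simp
  have hSne : S ≠ 0 := by
    intro h0
    rw [h0] at hScoeff
    simp only [Polynomial.coeff_zero] at hScoeff
    exact (Nat.cast_ne_zero (R := K)).mpr hr.ne' hScoeff.symm
  have hmul : S * (p - q) = 0 := by
    rw [hS, geom_sum₂_mul, h, sub_self]
  rcases mul_eq_zero.mp hmul with h1 | h1
  · exact absurd h1 hSne
  · exact sub_eq_zero.mp h1

open Matrix Kronecker in
/-- Tensoring the orthonormal bases of a family of subspaces with unitaries:
the tensored blocks have orthonormal columns, the cross Gram products satisfy
`L̄ᵢ* L̄ĩ L̄ĩ* L̄ᵢ = (Lᵢ* Lĩ Lĩ* Lᵢ) ⊗ I_r`, and the tensored family is equichordal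
(resp. equiisoclinic, strongly simplicial) iff the original family is. -/
theorem tensor_construction {𝕜 : Type*} [RCLike 𝕜] (n m k r : ℕ) (hr : 0 < r)
    (L : Fin n → Matrix (Fin k) (Fin m) 𝕜)
    (honb : ∀ i, (L i)ᴴ * L i = 1)
    (U : Fin n → Matrix (Fin r) (Fin r) 𝕜)
    (hU : ∀ i, U i ∈ Matrix.unitaryGroup (Fin r) 𝕜)
    (Lb : Fin n → Matrix (Fin k × Fin r) (Fin m × Fin r) 𝕜)
    (hLb : ∀ i, Lb i = (L i) ⊗ₖ (U i)) :
    (∀ i, (Lb i)ᴴ * Lb i = 1) ∧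
    (∀ i j, i ≠ j →
      (Lb i)ᴴ * Lb j * (Lb j)ᴴ * Lb i =
        ((L i)ᴴ * L j * (L j)ᴴ * L i) ⊗ₖ (1 : Matrix (Fin r) (Fin r) 𝕜)) ∧
    ((∃ c : 𝕜, ∀ i j, i ≠ j → ((Lb i)ᴴ * Lb j * (Lb j)ᴴ * Lb i).trace = c) ↔
     (∃ c : 𝕜, ∀ i j, i ≠ j → ((L i)ᴴ * L j * (L j)ᴴ * L i).trace = c)) ∧
    ((∃ α : ℝ, 0 < α ∧ ∀ i j, i ≠ j →
        (Lb i)ᴴ * Lb j * (Lb j)ᴴ * Lb i = (α : 𝕜) • 1) ↔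
     (∃ α : ℝ, 0 < α ∧ ∀ i j, i ≠ j →
        (L i)ᴴ * L j * (L j)ᴴ * L i = (α : 𝕜) • 1)) ∧
    ((∃ p : Polynomial 𝕜, ∀ i j, i ≠ j →
        ((Lb i)ᴴ * Lb j * (Lb j)ᴴ * Lb i).charpoly = p) ↔
     (∃ p : Polynomial 𝕜, ∀ i j, i ≠ j →
        ((L i)ᴴ * L j * (L j)ᴴ * L i).charpoly = p)) := by
  -- the unitary products collapse
  have hUU : ∀ i j : Fin n, (U i)ᴴ * U j * (U j)ᴴ * U i = 1 := by
    intro i j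
    have h1 : U j * (U j)ᴴ = 1 := by
      have := (hU j).2
      rwa [Matrix.star_eq_conjTranspose] at this
    have h2 : (U i)ᴴ * U i = 1 := by
      have := (hU i).1
      rwa [Matrix.star_eq_conjTranspose] at this
    calc (U i)ᴴ * U j * (U j)ᴴ * U i = (U i)ᴴ * (U j * (U j)ᴴ) * U i := by rw [mul_assoc ((U i)ᴴ) (U j) ((U j)ᴴ)]
      _ = (U i)ᴴ * U i := by rw [h1, mul_one]
      _ = 1 := h2
  -- the key identity, for all pairs
  have key : ∀ i j : Fin n, (Lb i)ᴴ * Lb j * (Lb j)ᴴ * Lb i =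
      ((L i)ᴴ * L j * (L j)ᴴ * L i) ⊗ₖ (1 : Matrix (Fin r) (Fin r) 𝕜) := by
    intro i j
    rw [hLb i, hLb j, kron_conjTranspose, kron_conjTranspose,
      ← mul_kronecker_mul, ← mul_kronecker_mul, ← mul_kronecker_mul, hUU]
  have i0 : Fin r := ⟨0, hr⟩
  have hrK : (r : 𝕜) ≠ 0 := Nat.cast_ne_zero.mpr hr.ne'
  refine ⟨?_, fun i j _ => key i j, ?_, ?_, ?_⟩
  · intro i
    have h2 : (U i)ᴴ * U i = 1 := by
      have := (hU i).1
      rwa [Matrix.star_eq_conjTranspose] at this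
    rw [hLb i, kron_conjTranspose, ← mul_kronecker_mul, honb i, h2, one_kronecker_one]
  · constructor
    · rintro ⟨c, hc⟩
      refine ⟨c / r, fun i j hij => ?_⟩
      have := hc i j hij
      rw [key i j, trace_kronecker, trace_one, Fintype.card_fin] at this
      field_simp [hrK] at this ⊢
      linear_combination this
    · rintro ⟨c, hc⟩
      refine ⟨c * r, fun i j hij => ?_⟩
      rw [key i j, trace_kronecker, trace_one, Fintype.card_fin, hc i j hij]
  · constructor
    · rintro ⟨α, hα, hc⟩
      refine ⟨α, hα, fun i j hij => ?_⟩
      have h := hc i j hij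
      rw [key i j] at h
      apply Matrix.ext
      intro a c
      have := congrFun (congrFun h (a, i0)) (c, i0)
      simp only [kroneckerMap_apply, Matrix.one_apply, Matrix.smul_apply, smul_eq_mul,
        Prod.mk.injEq, and_true] at this ⊢
      by_cases hac : a = c <;> simp [hac] at this ⊢ <;> simpa using this
    · rintro ⟨α, hα, hc⟩
      refine ⟨α, hα, fun i j hij => ?_⟩
      rw [key i j, hc i j hij, smul_kronecker, one_kronecker_one]
  · constructor
    · rintro ⟨p, hp⟩
      by_cases hpair : ∃ ij : Fin n × Fin n, ij.1 ≠ ij.2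
      · obtain ⟨⟨a, b⟩, hab⟩ := hpair
        refine ⟨((L a)ᴴ * L b * (L b)ᴴ * L a).charpoly, fun i j hij => ?_⟩
        have h := (hp i j hij).trans (hp a b hab).symm
        rw [key i j, key a b, charpoly_kron_one, charpoly_kron_one, Fintype.card_fin] at h
        exact monic_pow_inj (Matrix.charpoly_monic _) (Matrix.charpoly_monic _) hr h
      · exact ⟨0, fun i j hij => absurd ⟨(i, j), hij⟩ hpair⟩
    · rintro ⟨p, hp⟩
      refine ⟨p ^ r, fun i j hij => ?_⟩
      rw [key i j, charpoly_kron_one, Fintype.card_fin, hp i j hij]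
end

section
/- With the same tensoring construction (columns e^i_j ⊗ U_i for unitary r×r matrices U_i), the fusion frame operator satisfies L̄L̄* = (LL*) ⊗ I_r, where L (resp. L̄) is the horizontal concatenation of the L_i (resp. L̄_i). Consequently {col(L̄_i)}_{i=1}^n is a tight fusion frame for 𝔽^{rk} with bound A if and only if {col(L_i)}_{i=1}^n is a tight fusion frame for 𝔽^k with the same bound A. -/
open Matrix Kronecker in
lemma kronecker_conjTranspose' {𝕜 : Type*} [RCLike 𝕜] {a b c d : Type*}
    (X : Matrix a b 𝕜) (Y : Matrix c d 𝕜) :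
    (X ⊗ₖ Y)ᴴ = Xᴴ ⊗ₖ Yᴴ := by
  ext ⟨p, q⟩ ⟨s, t⟩
  simp [Matrix.conjTranspose_apply, Matrix.kroneckerMap_apply, StarMul.star_mul, mul_comm]

open Matrix Kronecker in
/-- Tensoring with unitaries and the fusion frame operator: `L̄L̄* = (LL*) ⊗ I_r`,
and the tensored family is a tight fusion frame with bound `A` iff the original
family is a tight fusion frame with the same bound `A`. -/
theorem tensor_construction_tight {𝕜 : Type*} [RCLike 𝕜] (n m k r : ℕ) (hr : 0 < r)
    (L : Fin n → Matrix (Fin k) (Fin m) 𝕜)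
    (honb : ∀ i, (L i)ᴴ * L i = 1)
    (U : Fin n → Matrix (Fin r) (Fin r) 𝕜)
    (hU : ∀ i, U i ∈ Matrix.unitaryGroup (Fin r) 𝕜)
    (Lb : Fin n → Matrix (Fin k × Fin r) (Fin m × Fin r) 𝕜)
    (hLb : ∀ i, Lb i = (L i) ⊗ₖ (U i)) :
    (∑ i, Lb i * (Lb i)ᴴ) =
      (∑ i, L i * (L i)ᴴ) ⊗ₖ (1 : Matrix (Fin r) (Fin r) 𝕜) ∧
    ∀ A : ℝ, ((∑ i, Lb i * (Lb i)ᴴ) = (A : 𝕜) • 1 ↔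
      (∑ i, L i * (L i)ᴴ) = (A : 𝕜) • 1) := by
  have hmain : (∑ i, Lb i * (Lb i)ᴴ) =
      (∑ i, L i * (L i)ᴴ) ⊗ₖ (1 : Matrix (Fin r) (Fin r) 𝕜) := by
    have key : ∀ i, Lb i * (Lb i)ᴴ = (L i * (L i)ᴴ) ⊗ₖ (1 : Matrix (Fin r) (Fin r) 𝕜) := by
      intro i
      have hUi : U i * (U i)ᴴ = 1 := Matrix.mem_unitaryGroup_iff.mp (hU i)
      rw [hLb i, kronecker_conjTranspose', ← Matrix.mul_kronecker_mul, hUi]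
    rw [Finset.sum_congr rfl (fun i _ => key i)]
    ext ⟨a, b⟩ ⟨c, d⟩
    simp [Matrix.sum_apply, Matrix.kroneckerMap_apply, Finset.sum_mul]
  refine ⟨hmain, fun A => ?_⟩
  constructor
  · intro h
    rw [hmain] at h
    ext a c
    have := congrFun (congrFun h (a, ⟨0, hr⟩)) (c, ⟨0, hr⟩)
    simpa [Matrix.kroneckerMap_apply, Matrix.one_apply, Matrix.smul_apply,
      Prod.ext_iff] using this
  · intro h
    rw [hmain, h]
    ext ⟨a, b⟩ ⟨c, d⟩
    simp only [Matrix.kroneckerMap_apply, Matrix.smul_apply, Matrix.one_apply, Prod.ext_iff,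
      smul_eq_mul]
    by_cases hac : a = c <;> by_cases hbd : b = d <;> simp [hac, hbd]
end
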